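/- For integers ν ≥ 2 and j ≥ 2, the identity Σ over pairs (j_1, j_2) of positive integers with j_1+j_2 = j of ζ_{j_1}^{(ν)} ζ_{j_2}^{(ν)} = (2/j)·C(νj, j−2) holds, where ζ_m^{(ν)} = (1/m)·C(νm, m−1). -/

import Mathlib

/-!
The numbers `ζ_m` are the coefficients of `F - 1`, where `F = 1 + X F^ν` is the generating
series of the Fuss–Catalan numbers, and more generally the coefficients of `F^i` are the Raney
numbers `i/(νn+i) · C(νn+i, n)`. This is proved by strong induction on `n`: up to order `n` the
series `F` agrees with `1 + X F^ν`, whose `i`-th power expands binomially into lower coefficients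
of powers of `F`, and the resulting sum is a Vandermonde convolution. The left-hand side of the
theorem is then the `j`-th coefficient of `(F - 1)^2 = X^2 F^{2ν}`.
-/

open Finset PowerSeries

namespace Nat

theorem sum_range_ite_choose_mul_choose (A B k : ℕ) :
    ∑ s ∈ range (A + 1), (if s ≤ k then A.choose s * B.choose (k - s) else 0) =
      (A + B).choose k := by
  rw [← sum_filter, add_choose_eq,
    Finset.Nat.sum_antidiagonal_eq_sum_range_succ fun a b => A.choose a * B.choose b]
  refine sum_subset (fun s hs => ?_) fun s hs hs' => ?_
  · simp only [mem_filter, mem_range] at hs ⊢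
    omega
  · simp only [mem_filter, mem_range, not_and, not_le] at hs hs'
    rw [choose_eq_zero_of_lt (by omega), zero_mul]

theorem sum_range_ite_mul_choose_mul_choose (i M n : ℕ) (hn : 0 < n) :
    ∑ t ∈ range (i + 1), (if t ≤ n then t * i.choose t * M.choose (n - t) else 0) =
      i * (M + i - 1).choose (n - 1) := by
  cases i with
  | zero => simp
  | succ A =>
    rw [sum_range_succ', show M + (A + 1) - 1 = A + M by omega,
      ← sum_range_ite_choose_mul_choose A M (n - 1), mul_sum]
    simp only [zero_mul, ite_self, add_zero]
    refine sum_congr rfl fun s _ => ?_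
    by_cases hs : s + 1 ≤ n
    · rw [if_pos hs, if_pos (by omega), show n - (s + 1) = n - 1 - s by omega, ← mul_assoc,
        add_one_mul_choose_eq, mul_comm (s + 1)]
    · rw [if_neg hs, if_neg (by omega), mul_zero]

end Nat

/-- The Raney number `R_{p,r}(k)`; the junk value `raney p 0 0 = 0` (rather than `1`) is why
the lemmas about powers of `fussCatalanSeries` ask for a positive exponent. -/
noncomputable def raney (p r k : ℕ) : ℚ :=
  r / (p * k + r) * (p * k + r).choose k

theorem raney_zero_right {r : ℕ} (p : ℕ) (hr : 0 < r) : raney p r 0 = 1 := by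
  simp [raney, hr.ne']

theorem raney_zero_left (p k : ℕ) : raney p 0 k = 0 := by
  simp [raney]

theorem raney_eq_div_mul_choose {p r k : ℕ} (hk : 0 < k) (hpkr : 0 < p * k + r) :
    raney p r k = r / k * (p * k + r - 1).choose (k - 1) := by
  have hchoose := Nat.add_one_mul_choose_eq (p * k + r - 1) (k - 1)
  rw [Nat.sub_add_cancel hpkr, Nat.sub_add_cancel hk] at hchoose
  have hk' : (k : ℚ) ≠ 0 := by positivity
  have hpkr' : (p * k + r : ℚ) ≠ 0 := by exact_mod_cast hpkr.ne'
  have hcast : ((p * k + r).choose k : ℚ) = (p * k + r) * (p * k + r - 1).choose (k - 1) / k := by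
    rw [eq_div_iff hk']
    exact_mod_cast hchoose.symm
  rw [raney, hcast]
  field_simp

theorem raney_mul_sub {p t n : ℕ} (hp : 0 < p) (ht : t ≤ n) (hn : 0 < n) :
    raney p (p * t) (n - t) = t / n * (p * n).choose (n - t) := by
  have hpn : p * (n - t) + p * t = p * n := by rw [← mul_add, Nat.sub_add_cancel ht]
  have hn' : (n : ℚ) ≠ 0 := by positivity
  have hp' : (p : ℚ) ≠ 0 := by positivity
  have hpn' : (p : ℚ) * (n - t : ℕ) + (p * t : ℕ) = p * n := by exact_mod_cast hpn
  rw [raney, hpn, hpn']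
  push_cast
  field_simp

theorem raney_one {p k : ℕ} (hk : 0 < k) : raney p 1 k = 1 / k * (p * k).choose (k - 1) := by
  rw [raney_eq_div_mul_choose hk (by omega), Nat.add_sub_cancel, Nat.cast_one]

theorem raney_one_succ {p : ℕ} (hp : 0 < p) (k : ℕ) : raney p 1 (k + 1) = raney p p k := by
  simpa using
    (raney_one (p := p) k.succ_pos).trans (raney_mul_sub (t := 1) hp (by omega) k.succ_pos).symm

theorem sum_range_choose_mul_raney {p n : ℕ} (hp : 0 < p) (hn : 0 < n) (i : ℕ) :
    ∑ t ∈ range (i + 1), i.choose t * (if t ≤ n then raney p (p * t) (n - t) else 0) =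
      raney p i n := by
  have hterm : ∀ t ∈ range (i + 1),
      i.choose t * (if t ≤ n then raney p (p * t) (n - t) else 0) =
        1 / n * ((if t ≤ n then t * i.choose t * (p * n).choose (n - t) else 0 : ℕ) : ℚ) := by
    intro t _
    split_ifs with ht
    · rw [raney_mul_sub hp ht hn]
      push_cast
      ring
    · simp
  rw [sum_congr rfl hterm, ← mul_sum, ← Nat.cast_sum,
    Nat.sum_range_ite_mul_choose_mul_choose _ _ _ hn, raney_eq_div_mul_choose hn (by positivity)]
  push_cast
  ring

theorem PowerSeries.coeff_pow_eq_of_coeff_eq {R : Type*} [CommRing R] {F G : R⟦X⟧} {n : ℕ}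
    (h : ∀ m ≤ n, coeff m F = coeff m G) (i : ℕ) : coeff n (F ^ i) = coeff n (G ^ i) := by
  have hFG : X ^ (n + 1) ∣ F - G :=
    X_pow_dvd_iff.2 fun m hm => by rw [map_sub, h m (by omega), sub_self]
  have := X_pow_dvd_iff.1 (hFG.trans (sub_dvd_pow_sub_pow F G i)) n n.lt_succ_self
  rwa [map_sub, sub_eq_zero] at this

theorem PowerSeries.coeff_one_add_X_mul_pow {R : Type*} [CommSemiring R] (G : R⟦X⟧) (n i : ℕ) :
    coeff n ((1 + X * G) ^ i) =
      ∑ t ∈ range (i + 1), i.choose t * (if t ≤ n then coeff (n - t) (G ^ t) else 0) := by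
  rw [add_comm, add_pow, map_sum]
  refine sum_congr rfl fun t _ => ?_
  rw [one_pow, mul_one, mul_pow, ← map_natCast (C (R := R)), coeff_mul_C, coeff_X_pow_mul',
    mul_comm]

noncomputable def fussCatalanSeries (p : ℕ) : ℚ⟦X⟧ :=
  mk (raney p 1)

theorem coeff_fussCatalanSeries (p k : ℕ) : coeff k (fussCatalanSeries p) = raney p 1 k :=
  coeff_mk _ _

theorem coeff_fussCatalanSeries_pow {p i : ℕ} (hp : 0 < p) (hi : 0 < i) (n : ℕ) :
    coeff n (fussCatalanSeries p ^ i) = raney p i n := by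
  induction n using Nat.strong_induction_on generalizing i with
  | _ n ih =>
  rcases Nat.eq_zero_or_pos n with rfl | hn
  · rw [coeff_zero_eq_constantCoeff_apply, map_pow, ← coeff_zero_eq_constantCoeff_apply,
      coeff_fussCatalanSeries, raney_zero_right p one_pos, raney_zero_right p hi, one_pow]
  have hagree : ∀ m ≤ n, coeff m (fussCatalanSeries p) =
      coeff m (1 + X * fussCatalanSeries p ^ p) := by
    rintro (_ | m) hm
    · simp [coeff_fussCatalanSeries, raney_zero_right p one_pos]
    · rw [map_add, coeff_one, coeff_succ_X_mul, ih m (by omega) hp, coeff_fussCatalanSeries,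
        raney_one_succ hp, if_neg m.succ_ne_zero, zero_add]
  rw [coeff_pow_eq_of_coeff_eq hagree, coeff_one_add_X_mul_pow,
    ← sum_range_choose_mul_raney hp hn]
  refine sum_congr rfl fun t _ => ?_
  congr 1
  split_ifs with ht
  · rcases Nat.eq_zero_or_pos t with rfl | ht0
    · simp [coeff_one, hn.ne', raney_zero_left]
    · rw [← pow_mul, ih (n - t) (by omega) (i := p * t) (by positivity)]
  · rfl

theorem fussCatalanSeries_sub_one {p : ℕ} (hp : 0 < p) :
    fussCatalanSeries p - 1 = X * fussCatalanSeries p ^ p := by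
  ext (_ | m)
  · rw [map_sub, coeff_one, if_pos rfl, coeff_zero_X_mul, coeff_fussCatalanSeries,
      raney_zero_right p one_pos, sub_self]
  · rw [map_sub, coeff_one, coeff_succ_X_mul, coeff_fussCatalanSeries_pow hp hp m,
      coeff_fussCatalanSeries, raney_one_succ hp, if_neg m.succ_ne_zero, sub_zero]

/-- For ν ≥ 2 and j ≥ 2: Σ_{j₁+j₂=j, j₁,j₂>0} ζ_{j₁} ζ_{j₂} = (2/j)·C(νj, j−2),
where ζ_m = (1/m)·C(νm, m−1). -/
theorem eta_two_formula (ν j : ℕ) (hν : 2 ≤ ν) (hj : 2 ≤ j)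
    (ζ : ℕ → ℚ) (hζ : ∀ m : ℕ, 1 ≤ m → ζ m = (1 / m) * ((ν * m).choose (m - 1))) :
    ∑ p ∈ (Finset.HasAntidiagonal.antidiagonal j).filter (fun p => 0 < p.1 ∧ 0 < p.2),
        ζ p.1 * ζ p.2 =
      (2 / j : ℚ) * ((ν * j).choose (j - 2)) := by
  have hν0 : 0 < ν := by omega
  have hsub := fussCatalanSeries_sub_one hν0
  set F := fussCatalanSeries ν
  have hF0 : coeff 0 (F - 1) = 0 := by
    rw [hsub, coeff_zero_X_mul]
  have hζF : ∀ m, 0 < m → ζ m = coeff m (F - 1) := fun m hm => by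
    rw [hζ m hm, map_sub, coeff_one, if_neg hm.ne', sub_zero, coeff_fussCatalanSeries,
      raney_one hm]
  calc ∑ p ∈ (HasAntidiagonal.antidiagonal j).filter (fun p => 0 < p.1 ∧ 0 < p.2), ζ p.1 * ζ p.2
      = ∑ p ∈ (HasAntidiagonal.antidiagonal j).filter (fun p => 0 < p.1 ∧ 0 < p.2),
          coeff p.1 (F - 1) * coeff p.2 (F - 1) :=
        sum_congr rfl fun q hq => by
          rw [mem_filter] at hq
          rw [hζF q.1 hq.2.1, hζF q.2 hq.2.2]
    _ = coeff j ((F - 1) * (F - 1)) := by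
      rw [coeff_mul]
      refine sum_filter_of_ne fun q _ hq => ⟨?_, ?_⟩ <;>
        refine Nat.pos_of_ne_zero fun h0 => hq ?_ <;> simp [h0, hF0]
    _ = coeff j (X ^ 2 * F ^ (ν * 2)) := by
      rw [hsub]
      congr 1
      ring
    _ = raney ν (ν * 2) (j - 2) := by
      rw [coeff_X_pow_mul', if_pos hj, coeff_fussCatalanSeries_pow hν0 (by omega)]
    _ = 2 / j * (ν * j).choose (j - 2) := by
      rw [raney_mul_sub hν0 hj (by omega)]
      push_cast
      ring
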